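/- Let K be a differential field of characteristic zero whose field of constants is C (the kernel of the derivation D). Let F, G, H ∈ K be nonzero and suppose Φ(F,G,H) = 0 and Φ(1/F, 1/G, 1/H) = 0, where Φ(F₁,F₂,F₃) := F₁F₂F₃·det[[1,1,1],[1/F₁,1/F₂,1/F₃],[D(1/F₁),D(1/F₂),D(1/F₃)]]. Then either two of F, G, H are equal, or all three ratios F/G, G/H, H/F are constants (lie in C). -/

import Mathlib

/-!
Write `u = D F / F`, `v = D G / G`, `w = D H / H` for the logarithmic derivatives. Since
`D (1/F) = -u / F`, the two vanishing conditions become the linear relations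
`(H - G) u + (F - H) v + (G - F) w = 0` and `(H - G) F u + (F - H) G v + (G - F) H w = 0`,
whose solution space contains `(1, 1, 1)`. When `F, G, H` are pairwise distinct the system
has rank two, so `u = v = w`, which says exactly that the ratios `F/G, G/H, H/F` are constants.
-/

theorem det_ones_row_eq {R : Type*} [CommRing R] (x y z a b c : R) :
    Matrix.det !![1, 1, 1; x, y, z; a, b, c] = (z - y) * a + (x - z) * b + (y - x) * c := by
  simp only [Matrix.det_fin_three, Matrix.of_apply, Matrix.cons_val', Matrix.cons_val_zero,
    Matrix.cons_val_fin_one, Matrix.cons_val_one, Matrix.cons_val, one_mul]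
  ring

section Leibniz

variable {K : Type*} {D : K → K}

theorem leibniz_map_one [Ring K] (hmul : ∀ x y, D (x * y) = x * D y + D x * y) : D 1 = 0 := by
  simpa using hmul 1 1

variable [Field K] (hmul : ∀ x y, D (x * y) = x * D y + D x * y)
include hmul

theorem leibniz_map_inv {x : K} (hx : x ≠ 0) : D x⁻¹ = -(D x / x) * x⁻¹ := by
  have h : x * D x⁻¹ + D x * x⁻¹ = 0 := by
    rw [← hmul, mul_inv_cancel₀ hx, leibniz_map_one hmul]
  linear_combination x⁻¹ * h - D x⁻¹ * inv_mul_cancel₀ hx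

theorem leibniz_map_div {x y : K} (hx : x ≠ 0) (hy : y ≠ 0) :
    D (x / y) = x / y * (D x / x - D y / y) := by
  rw [div_eq_mul_inv, hmul, leibniz_map_inv hmul hy]
  field_simp
  ring

theorem mul_det_inv_eq_sum_logDeriv {F G H : K} (hF : F ≠ 0) (hG : G ≠ 0) (hH : H ≠ 0) :
    F * G * H * Matrix.det !![1, 1, 1; F⁻¹, G⁻¹, H⁻¹; D F⁻¹, D G⁻¹, D H⁻¹] =
      (H - G) * (D F / F) + (F - H) * (D G / G) + (G - F) * (D H / H) := by
  rw [det_ones_row_eq, leibniz_map_inv hmul hF, leibniz_map_inv hmul hG,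
    leibniz_map_inv hmul hH]
  field_simp
  ring

end Leibniz

theorem eq_of_cartan_relations {R : Type*} [CommRing R] [IsDomain R] {x y z a b c : R}
    (h₁ : (z - y) * a + (x - z) * b + (y - x) * c = 0)
    (h₂ : (z - y) * (x * a) + (x - z) * (y * b) + (y - x) * (z * c) = 0)
    (hxy : x ≠ y) (hxz : x ≠ z) : b = c := by
  have h : (x - z) * (x - y) * (b - c) = 0 := by linear_combination x * h₁ - h₂
  rcases mul_eq_zero.mp h with h | h
  · rcases mul_eq_zero.mp h with h | h
    · exact absurd (sub_eq_zero.mp h) hxz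
    · exact absurd (sub_eq_zero.mp h) hxy
  · exact sub_eq_zero.mp h

theorem stmt_6_general (K : Type*) [Field K] (D : K → K)
    (hmul : ∀ x y, D (x * y) = x * D y + D x * y)
    (F G H : K) (hF : F ≠ 0) (hG : G ≠ 0) (hH : H ≠ 0)
    (hΦ : F * G * H *
      (Matrix.det !![1, 1, 1; F⁻¹, G⁻¹, H⁻¹; D F⁻¹, D G⁻¹, D H⁻¹]) = 0)
    (hΦinv : F⁻¹ * G⁻¹ * H⁻¹ *
      (Matrix.det !![1, 1, 1; F, G, H; D F, D G, D H]) = 0) :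
    (F = G ∨ G = H ∨ H = F) ∨
      (D (F / G) = 0 ∧ D (G / H) = 0 ∧ D (H / F) = 0) := by
  by_cases hdistinct : F = G ∨ G = H ∨ H = F
  · exact Or.inl hdistinct
  push Not at hdistinct
  obtain ⟨hFG, hGH, hHF⟩ := hdistinct
  have h₁ : (H - G) * (D F / F) + (F - H) * (D G / G) + (G - F) * (D H / H) = 0 := by
    rwa [← mul_det_inv_eq_sum_logDeriv hmul hF hG hH]
  have h₂ : (H - G) * (F * (D F / F)) + (F - H) * (G * (D G / G)) +
      (G - F) * (H * (D H / H)) = 0 := by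
    rw [mul_div_cancel₀ _ hF, mul_div_cancel₀ _ hG, mul_div_cancel₀ _ hH, ← det_ones_row_eq]
    simpa [hF, hG, hH] using hΦinv
  have hvw : D G / G = D H / H := eq_of_cartan_relations h₁ h₂ hFG hHF.symm
  -- both relations are invariant under the cyclic shift `F → G → H → F`
  have hwu : D H / H = D F / F :=
    eq_of_cartan_relations (x := G) (y := H) (z := F) (a := D G / G)
      (by linear_combination h₁) (by linear_combination h₂) hGH hFG.symm
  refine Or.inr ⟨?_, ?_, ?_⟩
  · rw [leibniz_map_div hmul hF hG, hwu.symm.trans hvw.symm, sub_self, mul_zero]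
  · rw [leibniz_map_div hmul hG hH, hvw, sub_self, mul_zero]
  · rw [leibniz_map_div hmul hH hF, hwu, sub_self, mul_zero]

/-- Fujimoto's proposition: if Cartan's auxiliary function vanishes for `(F,G,H)`
and for `(1/F,1/G,1/H)`, then either two of the functions coincide, or all three
ratios `F/G`, `G/H`, `H/F` are constants (lie in the kernel of the derivation). -/
theorem stmt_6 (K : Type*) [Field K] [CharZero K] (D : K → K)
    (hadd : ∀ x y, D (x + y) = D x + D y)
    (hmul : ∀ x y, D (x * y) = x * D y + D x * y)
    (F G H : K) (hF : F ≠ 0) (hG : G ≠ 0) (hH : H ≠ 0)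
    (hΦ : F * G * H *
      (Matrix.det !![1, 1, 1; F⁻¹, G⁻¹, H⁻¹; D F⁻¹, D G⁻¹, D H⁻¹]) = 0)
    (hΦinv : F⁻¹ * G⁻¹ * H⁻¹ *
      (Matrix.det !![1, 1, 1; F, G, H; D F, D G, D H]) = 0) :
    (F = G ∨ G = H ∨ H = F) ∨
      (D (F / G) = 0 ∧ D (G / H) = 0 ∧ D (H / F) = 0) :=
  stmt_6_general K D hmul F G H hF hG hH hΦ hΦinv
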